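/- arXiv:1901.05833 — 2 statements merged into one kernel-verified Lean document; each statement's English description precedes it below -/
import Mathlib

section
/- Let v₁, v₂ ∈ ℍ(ℚ) be linearly independent over ℚ and let L be their ℚ-span. Then L = {x ∈ ℍ(ℚ) : a₁(v₁,v₂)·x = x·a₂(v₁,v₂)}. -/
/-!
Put `a = Im(v₁ v̄₂)` and `b = Im(v̄₂ v₁)`. Since `v₁ v̄₂` and `v̄₂ v₁` have the same real part `r`,
`a v₁ = v₁ v̄₂ v₁ - r v₁ = v₁ b` and `a v₂ = |v₂|² v₁ - r v₂ = v₂ b`, so the span lies in the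
solution set. Conversely, if `a x = x b` then `x v̄₂` commutes with `a`, which is a nonzero pure
quaternion by linear independence; so `x v̄₂ ∈ ℚ + ℚ a`, and multiplying by `v₂` puts `|v₂|² x`
in the span of `v₂` and `a v₂`.
-/

namespace Quaternion

section CommRing

variable {R : Type*} [CommRing R]

theorem re_mul_comm (p q : ℍ[R]) : (p * q).re = (q * p).re := by
  simp only [re_mul]; ring

theorem im_eq_sub_re (p : ℍ[R]) : p.im = p - p.re := eq_sub_of_add_eq' (re_add_im p)

theorem im_mul_mul_self (p q : ℍ[R]) : (p * q).im * p = p * (q * p).im := by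
  rw [im_eq_sub_re, im_eq_sub_re (q * p), re_mul_comm, sub_mul, mul_sub, mul_assoc,
    (coe_commute _ p).eq]

theorem im_mul_star_mul (p q : ℍ[R]) :
    (p * star q).im * q = normSq q • p - (p * star q).re • q := by
  rw [im_eq_sub_re, sub_mul, mul_assoc, star_mul_self, mul_coe_eq_smul, coe_mul_eq_smul]

theorem im_mul_star_mul_eq_mul_im (p q : ℍ[R]) :
    (p * star q).im * q = q * (star q * p).im := by
  rw [im_mul_star_mul, im_eq_sub_re (star q * p), re_mul_comm, mul_sub, ← mul_assoc,
    self_mul_star, coe_mul_eq_smul, mul_coe_eq_smul]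

theorem im_mul_star_mul_eq_of_mem_span_pair {v₁ v₂ x : ℍ[R]}
    (hx : x ∈ Submodule.span R {v₁, v₂}) :
    (v₁ * star v₂).im * x = x * (star v₂ * v₁).im := by
  have hle : Submodule.span R {v₁, v₂} ≤ LinearMap.ker
      (LinearMap.mulLeft R (v₁ * star v₂).im - LinearMap.mulRight R (star v₂ * v₁).im) := by
    rw [Submodule.span_le, Set.insert_subset_iff, Set.singleton_subset_iff]
    simp only [SetLike.mem_coe, LinearMap.mem_ker, LinearMap.sub_apply, LinearMap.mulLeft_apply,
      LinearMap.mulRight_apply, sub_eq_zero]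
    exact ⟨im_mul_mul_self v₁ (star v₂), im_mul_star_mul_eq_mul_im v₁ v₂⟩
  simpa only [LinearMap.mem_ker, LinearMap.sub_apply, LinearMap.mulLeft_apply,
    LinearMap.mulRight_apply, sub_eq_zero] using hle hx

end CommRing

section LinearOrderedField

variable {R : Type*} [Field R] [LinearOrder R] [IsStrictOrderedRing R]

theorem exists_eq_coe_add_smul_of_mul_comm {a y : ℍ[R]} (ha : a.re = 0) (ha₀ : a ≠ 0)
    (h : a * y = y * a) : ∃ s t : R, y = s + t • a := by
  have hI := congrArg (·.imI) h
  have hJ := congrArg (·.imJ) h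
  have hK := congrArg (·.imK) h
  simp only [imI_mul, imJ_mul, imK_mul, ha] at hI hJ hK
  -- the commutator of two pure quaternions is twice their cross product
  have c₁ : a.imJ * y.imK = a.imK * y.imJ := by linarith
  have c₂ : a.imK * y.imI = a.imI * y.imK := by linarith
  have c₃ : a.imI * y.imJ = a.imJ * y.imI := by linarith
  have hN : a.imI ^ 2 + a.imJ ^ 2 + a.imK ^ 2 ≠ 0 := by
    have := normSq_ne_zero.2 ha₀
    rwa [normSq_def', ha, zero_pow two_ne_zero, zero_add] at this
  refine ⟨y.re,
    (a.imI * y.imI + a.imJ * y.imJ + a.imK * y.imK) / (a.imI ^ 2 + a.imJ ^ 2 + a.imK ^ 2), ?_⟩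
  ext <;> simp only [re_add, imI_add, imJ_add, imK_add, re_smul, imI_smul, imJ_smul, imK_smul,
    re_coe, imI_coe, imJ_coe, imK_coe, smul_eq_mul, ha] <;> field_simp
  · ring
  · linear_combination (-a.imJ) * c₃ + a.imK * c₂
  · linear_combination a.imI * c₃ - a.imK * c₁
  · linear_combination a.imJ * c₁ - a.imI * c₂

variable {v₁ v₂ x : ℍ[R]}

theorem mem_span_pair_of_im_mul_star_mul_eq (hli : LinearIndependent R ![v₁, v₂])
    (hx : (v₁ * star v₂).im * x = x * (star v₂ * v₁).im) : x ∈ Submodule.span R {v₁, v₂} := by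
  set a := (v₁ * star v₂).im
  have hv₂ : normSq v₂ ≠ 0 := normSq_ne_zero.2 (by simpa using hli.ne_zero 1)
  have hav₂ : a * v₂ = normSq v₂ • v₁ - (v₁ * star v₂).re • v₂ := im_mul_star_mul v₁ v₂
  have ha₀ : a ≠ 0 := by
    intro ha
    refine hv₂ (LinearIndependent.pair_iff.1 hli _ (-(v₁ * star v₂).re) ?_).1
    rw [neg_smul, ← sub_eq_add_neg, ← hav₂, ha, zero_mul]
  have hcomm : a * (x * star v₂) = x * star v₂ * a := by
    rw [← mul_assoc, hx, mul_assoc, im_mul_mul_self, mul_assoc]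
  obtain ⟨s, t, hst⟩ := exists_eq_coe_add_smul_of_mul_comm (re_im _) ha₀ hcomm
  have hx' : normSq v₂ • x = s • v₂ + t • (a * v₂) := by
    calc normSq v₂ • x = x * star v₂ * v₂ := by rw [mul_assoc, star_mul_self, mul_coe_eq_smul]
      _ = s • v₂ + t • (a * v₂) := by rw [hst, add_mul, coe_mul_eq_smul, smul_mul_assoc]
  have hv₁_mem : v₁ ∈ Submodule.span R {v₁, v₂} := Submodule.subset_span (by simp)
  have hv₂_mem : v₂ ∈ Submodule.span R {v₁, v₂} := Submodule.subset_span (by simp)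
  rw [← Submodule.smul_mem_iff _ hv₂, hx', hav₂]
  exact add_mem (Submodule.smul_mem _ _ hv₂_mem) <| Submodule.smul_mem _ _ <|
    sub_mem (Submodule.smul_mem _ _ hv₁_mem) (Submodule.smul_mem _ _ hv₂_mem)

end LinearOrderedField

end Quaternion

open Quaternion

/-- For linearly independent `v₁, v₂ ∈ ℍ(ℚ)` with `ℚ`-span `L`,
`L = {x : a₁(v₁,v₂) * x = x * a₂(v₁,v₂)}` where `a₁(v₁,v₂) = Im(v₁ conj v₂)` and
`a₂(v₁,v₂) = Im(conj v₂ * v₁)`. -/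
theorem stmt_3 (v₁ v₂ : ℍ[ℚ]) (hli : LinearIndependent ℚ ![v₁, v₂]) :
    (Submodule.span ℚ ({v₁, v₂} : Set ℍ[ℚ]) : Set ℍ[ℚ]) =
      {x : ℍ[ℚ] | (v₁ * star v₂).im * x = x * (star v₂ * v₁).im} :=
  Set.Subset.antisymm (fun _ ↦ im_mul_star_mul_eq_of_mem_span_pair)
    (fun _ ↦ mem_span_pair_of_im_mul_star_mul_eq hli)
end

section
/- Let v₁, v₂ ∈ ℍ(ℚ) be linearly independent over ℚ, set a₁ = a₁(v₁,v₂), a₂ = a₂(v₁,v₂), and let g ∈ ℍ(ℚ) be nonzero with a₂·g = g·a₁. Let α, β ∈ ℍ(ℚ) satisfy Nr(α) = Nr(β) = 1. Then α·x·conj β = x for all x ∈ ℍ(ℚ) satisfying a₁·x = −x·a₂ if and only if α·a₁ = a₁·α and β·g = g·conj α. -/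
/-!
Put `a = Im(v₁ v̄₂)` and `b = Im(v̄₂ v₁)`. Since `v₁ v̄₂` and `v̄₂ v₁` have the same real part,
`a v₁ = v₁ b`, and `a ≠ 0` because `v₁ v̄₂` is real only when `v₁ ∥ v₂`. As `Nr β = 1`, the
condition `α x β̄ = x` means `α x = x β`. Right multiplication by `g` maps solutions of
`a x = -x b` to quaternions anticommuting with `a`, and if `α` commutes with `a ≠ 0` then
`α y = y ᾱ` for every such `y`, because `α y - y ᾱ` both commutes and anticommutes with `a`.
So once `α a = a α`, the condition `α x = x β` becomes `x (g ᾱ) = x (β g)`. Conversely, testing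
`α x = x β` on a nonzero solution `x₀` and on `a x₀` forces `α a = a α`; one may take
`x₀ = p v₁` with `p ≠ 0` anticommuting with `a`.
-/

open Quaternion

section Ring

variable {A : Type*} [Ring A]

theorem mul_mul_eq_neg_of_intertwine {a b g x : A} (hx : a * x = -(x * b))
    (hg : b * g = g * a) : a * (x * g) = -(x * g * a) := by
  rw [← mul_assoc, hx, neg_mul, mul_assoc, hg, mul_assoc]

theorem mul_sub_mul_eq_neg_of_commute {a α α' y : A} (hα : α * a = a * α)
    (hα' : α' * a = a * α') (hy : a * y = -(y * a)) :
    a * (α * y - y * α') = -((α * y - y * α') * a) := by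
  calc a * (α * y - y * α') = α * (a * y) - (a * y) * α' := by
        rw [mul_sub, ← mul_assoc a α, ← hα, mul_assoc, ← mul_assoc a y]
    _ = -((α * y - y * α') * a) := by
        rw [hy, neg_mul, mul_assoc y, ← hα']; noncomm_ring

end Ring

namespace Quaternion

section CommRing

variable {R : Type*} [CommRing R]

theorem im_mul_star_mul_s6 (v w : ℍ[R]) : (v * star w).im * v = v * (star w * v).im := by
  ext <;> simp <;> ring

theorem mul_sub_mul_star (α y : ℍ[R]) :
    α * y - y * star α = ↑(2 * y.re) * α.im + ↑(2 * (α.im * y).re) := by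
  ext <;> simp <;> ring

theorem mul_mul_star_eq_iff {α β : ℍ[R]} (hβ : normSq β = 1) (x : ℍ[R]) :
    α * x * star β = x ↔ α * x = x * β := by
  constructor
  · intro h
    rw [← h, mul_assoc _ (star β), star_mul_self, hβ, coe_one, mul_one, h]
  · intro h
    rw [h, mul_assoc, self_mul_star, hβ, coe_one, mul_one]

end CommRing

section LinearOrderedCommRing

variable {R : Type*} [CommRing R] [LinearOrder R] [IsStrictOrderedRing R]

/-- The square of a pure quaternion is central. -/
theorem mul_commutator_eq_neg {a : ℍ[R]} (ha : a.re = 0) (u : ℍ[R]) :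
    a * (a * u - u * a) = -((a * u - u * a) * a) := by
  have hsq : a * a = -↑(normSq a) := by rw [← sq]; exact sq_eq_neg_normSq.mpr ha
  have hc : a * a * u = u * (a * a) := by rw [hsq, neg_mul, mul_neg, coe_commutes]
  rw [mul_sub, sub_mul, ← mul_assoc, hc]
  simp only [mul_assoc]
  abel

theorem exists_ne_zero_mul_eq_neg {a : ℍ[R]} (ha : a.re = 0) (ha0 : a ≠ 0) :
    ∃ p ≠ 0, a * p = -(p * a) := by
  -- otherwise every commutator `a u - u a` vanishes, and testing `u = i, j` kills `a`
  by_contra! h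
  have hcomm (u : ℍ[R]) : a * u - u * a = 0 :=
    by_contra fun hu ↦ h _ hu (mul_commutator_eq_neg ha u)
  obtain ⟨i, j, hi, hj⟩ : ∃ i j : ℍ[R], (i.re = 0 ∧ i.imI = 1 ∧ i.imJ = 0 ∧ i.imK = 0) ∧
      (j.re = 0 ∧ j.imI = 0 ∧ j.imJ = 1 ∧ j.imK = 0) :=
    ⟨⟨0, 1, 0, 0⟩, ⟨0, 0, 1, 0⟩, by simp, by simp⟩
  have hai := Quaternion.ext_iff.mp (hcomm i)
  have haj := Quaternion.ext_iff.mp (hcomm j)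
  simp only [re_sub, re_mul, hi, mul_zero, mul_one, zero_sub, sub_zero, zero_mul, one_mul,
    sub_self, re_zero, imI_sub, imI_mul, add_zero, zero_add, imI_zero, imJ_sub, imJ_mul,
    sub_neg_eq_add, imJ_zero, add_self_eq_zero, imK_sub, imK_mul, imK_zero, true_and, hj]
    at hai haj
  apply ha0
  ext <;> simp <;> linarith

end LinearOrderedCommRing

section LinearOrderedField

variable {R : Type*} [Field R] [LinearOrder R] [IsStrictOrderedRing R]

theorem im_mul_star_ne_zero {v w : ℍ[R]} (hvw : LinearIndependent R ![v, w]) :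
    (v * star w).im ≠ 0 := by
  rw [linearIndependent_fin2] at hvw
  obtain ⟨hw, hvw⟩ := hvw
  simp only [Matrix.cons_val_one, Matrix.cons_val_zero] at hw hvw
  intro h
  set r := (v * star w).re
  have hre : v * star w = r := by rw [← re_add_im (v * star w), h, add_zero]
  have hsmul : normSq w • v = r • w := by
    rw [← coe_mul_eq_smul, ← coe_mul_eq_smul, coe_commutes, ← star_mul_self, ← mul_assoc, ← hre]
  apply hvw (r / normSq w)
  rw [div_eq_inv_mul, mul_smul, ← hsmul, smul_smul, inv_mul_cancel₀ (normSq_ne_zero.mpr hw),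
    one_smul]

theorem exists_ne_zero_im_mul_star_mul_eq_neg {v w : ℍ[R]} (hvw : LinearIndependent R ![v, w]) :
    ∃ x ≠ 0, (v * star w).im * x = -(x * (star w * v).im) := by
  obtain ⟨p, hp, hpa⟩ := exists_ne_zero_mul_eq_neg (re_im _) (im_mul_star_ne_zero hvw)
  refine ⟨p * v, mul_ne_zero hp (hvw.ne_zero 0), ?_⟩
  rw [← mul_assoc, hpa, neg_mul, mul_assoc, im_mul_star_mul_s6, ← mul_assoc]

theorem eq_zero_of_commute_of_anticommute {a q : ℍ[R]} (ha : a ≠ 0) (hc : a * q = q * a)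
    (hac : a * q = -(q * a)) : q = 0 := by
  have h2 : (2 : R) • (q * a) = 0 := by
    rw [two_smul]; exact neg_eq_iff_add_eq_zero.mp (hac.symm.trans hc)
  have hqa : q * a = 0 := (smul_eq_zero.mp h2).resolve_left two_ne_zero
  exact (mul_eq_zero.mp hqa).resolve_right ha

theorem mul_eq_mul_star_of_commute {a α y : ℍ[R]} (ha : a ≠ 0) (hα : α * a = a * α)
    (hy : a * y = -(y * a)) : α * y = y * star α := by
  have hαim : Commute α.im a := by
    rw [← sub_re_self]; exact Commute.sub_left hα (coe_commute _ _)
  have hαs : Commute (star α) a := by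
    rw [star_eq_two_re_sub]; exact Commute.sub_left (coe_commute _ _) hα
  have hcomm : a * (α * y - y * star α) = (α * y - y * star α) * a := by
    rw [mul_sub_mul_star]
    exact (((coe_commute _ a).mul_left hαim).add_left (coe_commute _ a)).eq.symm
  exact sub_eq_zero.mp <| eq_zero_of_commute_of_anticommute ha hcomm <|
    mul_sub_mul_eq_neg_of_commute hα hαs.eq hy

end LinearOrderedField

end Quaternion

theorem stmt_6_general (v₁ v₂ : ℍ[ℚ]) (hli : LinearIndependent ℚ ![v₁, v₂])
    (g : ℍ[ℚ]) (hg : g ≠ 0)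
    (hg2 : (star v₂ * v₁).im * g = g * (v₁ * star v₂).im)
    (α β : ℍ[ℚ]) (hβ : Quaternion.normSq β = 1) :
    (∀ x : ℍ[ℚ], (v₁ * star v₂).im * x = -(x * (star v₂ * v₁).im) → α * x * star β = x) ↔
      (α * (v₁ * star v₂).im = (v₁ * star v₂).im * α ∧ β * g = g * star α) := by
  set a := (v₁ * star v₂).im
  set b := (star v₂ * v₁).im
  have ha : a ≠ 0 := im_mul_star_ne_zero hli
  have hαxg (x : ℍ[ℚ]) (hx : a * x = -(x * b)) (hαa : α * a = a * α) :
      α * x * g = x * (g * star α) := by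
    rw [mul_assoc, mul_eq_mul_star_of_commute ha hαa (mul_mul_eq_neg_of_intertwine hx hg2),
      mul_assoc]
  simp only [mul_mul_star_eq_iff hβ]
  constructor
  · intro H
    obtain ⟨x₀, hx₀0, hx₀⟩ := exists_ne_zero_im_mul_star_mul_eq_neg hli
    have hax₀ : a * (a * x₀) = -(a * x₀ * b) := by rw [mul_assoc a x₀ b, ← mul_neg, hx₀]
    have hαa : α * a = a * α := by
      refine mul_right_cancel₀ hx₀0 ?_
      rw [mul_assoc, H _ hax₀, mul_assoc, ← H _ hx₀, mul_assoc]
    refine ⟨hαa, mul_left_cancel₀ hx₀0 ?_⟩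
    rw [← mul_assoc, ← H _ hx₀, hαxg _ hx₀ hαa]
  · rintro ⟨hαa, hβg⟩ x hx
    refine mul_right_cancel₀ hg ?_
    rw [hαxg x hx hαa, ← hβg, mul_assoc]

/-- Let `v₁, v₂ ∈ ℍ(ℚ)` be linearly independent, put
`a₁ = Im(v₁ conj v₂)`, `a₂ = Im(conj v₂ * v₁)`, and let `g ≠ 0` satisfy `a₂ g = g a₁`.
If `Nr α = Nr β = 1`, then `α x conj β = x` for all `x` with `a₁ x = - x a₂` iff
`α a₁ = a₁ α` and `β g = g (conj α)`. -/
theorem stmt_6 (v₁ v₂ : ℍ[ℚ]) (hli : LinearIndependent ℚ ![v₁, v₂])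
    (g : ℍ[ℚ]) (hg : g ≠ 0)
    (hg2 : (star v₂ * v₁).im * g = g * (v₁ * star v₂).im)
    (α β : ℍ[ℚ]) (hα : Quaternion.normSq α = 1) (hβ : Quaternion.normSq β = 1) :
    (∀ x : ℍ[ℚ], (v₁ * star v₂).im * x = -(x * (star v₂ * v₁).im) → α * x * star β = x) ↔
      (α * (v₁ * star v₂).im = (v₁ * star v₂).im * α ∧ β * g = g * star α) :=
  stmt_6_general v₁ v₂ hli g hg hg2 α β hβ
end
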